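/- arXiv:2110.13704 — 2 statements merged into one kernel-verified Lean document; each statement's English description precedes it below -/
import Mathlib

section
/- In the lambda calculus with pair/fst/snd constructors as above, the proof-irrelevance step relation generated by pair(T,P,m,h₀) ↔ pair(T,P,m,h₁) (closed under contexts and substitution) can be postponed over βπ-reduction: if t ↔_pi u and u →_{βπ} v, then there exists w with t →_{βπ}= w and w ↔_pi* v, where →_{βπ}= is the reflexive closure of one-step βπ-reduction and ↔_pi* the reflexive-transitive closure of ↔_pi. -/
/-- Untyped λ-terms (de Bruijn) extended with a 4-ary pair constructor and
3-ary left/right projections. -/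
inductive Tm : Type
  | var : Nat → Tm
  | app : Tm → Tm → Tm
  | lam : Tm → Tm → Tm                 -- λ(x : T). M
  | pair : Tm → Tm → Tm → Tm → Tm      -- ⟨T, P, m, h⟩
  | fst : Tm → Tm → Tm → Tm            -- π₁(T, P, m)
  | snd : Tm → Tm → Tm → Tm            -- π₂(T, P, m)

namespace Tm

/-- Shift the free variables `≥ k` by `d`. -/
def lift (d k : Nat) : Tm → Tm
  | var n => if n < k then var n else var (n + d)
  | app m n => app (lift d k m) (lift d k n)
  | lam t m => lam (lift d k t) (lift d (k + 1) m)
  | pair t p m h => pair (lift d k t) (lift d k p) (lift d k m) (lift d k h)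
  | fst t p m => fst (lift d k t) (lift d k p) (lift d k m)
  | snd t p m => snd (lift d k t) (lift d k p) (lift d k m)

/-- Capture-avoiding substitution of `s` for variable `k`. -/
def subst (k : Nat) (s : Tm) : Tm → Tm
  | var n => if n = k then lift k 0 s else if k < n then var (n - 1) else var n
  | app m n => app (subst k s m) (subst k s n)
  | lam t m => lam (subst k s t) (subst (k + 1) s m)
  | pair t p m h => pair (subst k s t) (subst k s p) (subst k s m) (subst k s h)
  | fst t p m => fst (subst k s t) (subst k s p) (subst k s m)
  | snd t p m => snd (subst k s t) (subst k s p) (subst k s m)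

/-- One-step βπ-reduction: β plus `fst(T₀,P₀,⟨T₁,P₁,m,h⟩) → m`,
closed under contexts. -/
inductive Step : Tm → Tm → Prop
  | beta (t m n : Tm) : Step (app (lam t m) n) (subst 0 n m)
  | proj (t₀ p₀ t₁ p₁ m h : Tm) : Step (fst t₀ p₀ (pair t₁ p₁ m h)) m
  | appL {m m'} (n) : Step m m' → Step (app m n) (app m' n)
  | appR (m) {n n'} : Step n n' → Step (app m n) (app m n')
  | lamT {t t'} (m) : Step t t' → Step (lam t m) (lam t' m)
  | lamM (t) {m m'} : Step m m' → Step (lam t m) (lam t m')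
  | pair₁ {t t'} (p m h) : Step t t' → Step (pair t p m h) (pair t' p m h)
  | pair₂ (t) {p p'} (m h) : Step p p' → Step (pair t p m h) (pair t p' m h)
  | pair₃ (t p) {m m'} (h) : Step m m' → Step (pair t p m h) (pair t p m' h)
  | pair₄ (t p m) {h h'} : Step h h' → Step (pair t p m h) (pair t p m h')
  | fst₁ {t t'} (p m) : Step t t' → Step (fst t p m) (fst t' p m)
  | fst₂ (t) {p p'} (m) : Step p p' → Step (fst t p m) (fst t p' m)
  | fst₃ (t p) {m m'} : Step m m' → Step (fst t p m) (fst t p m')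
  | snd₁ {t t'} (p m) : Step t t' → Step (snd t p m) (snd t' p m)
  | snd₂ (t) {p p'} (m) : Step p p' → Step (snd t p m) (snd t p' m)
  | snd₃ (t p) {m m'} : Step m m' → Step (snd t p m) (snd t p m')

/-- One-step proof-irrelevance relation: change the proof component of a pair,
closed under contexts. It is symmetric by construction. -/
inductive PiStep : Tm → Tm → Prop
  | pi (t p m h₀ h₁ : Tm) : PiStep (pair t p m h₀) (pair t p m h₁)
  | appL {m m'} (n) : PiStep m m' → PiStep (app m n) (app m' n)
  | appR (m) {n n'} : PiStep n n' → PiStep (app m n) (app m n')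
  | lamT {t t'} (m) : PiStep t t' → PiStep (lam t m) (lam t' m)
  | lamM (t) {m m'} : PiStep m m' → PiStep (lam t m) (lam t m')
  | pair₁ {t t'} (p m h) : PiStep t t' → PiStep (pair t p m h) (pair t' p m h)
  | pair₂ (t) {p p'} (m h) : PiStep p p' → PiStep (pair t p m h) (pair t p' m h)
  | pair₃ (t p) {m m'} (h) : PiStep m m' → PiStep (pair t p m h) (pair t p m' h)
  | fst₁ {t t'} (p m) : PiStep t t' → PiStep (fst t p m) (fst t' p m)
  | fst₂ (t) {p p'} (m) : PiStep p p' → PiStep (fst t p m) (fst t p' m)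
  | fst₃ (t p) {m m'} : PiStep m m' → PiStep (fst t p m) (fst t p m')
  | snd₁ {t t'} (p m) : PiStep t t' → PiStep (snd t p m) (snd t' p m)
  | snd₂ (t) {p p'} (m) : PiStep p p' → PiStep (snd t p m) (snd t p' m)
  | snd₃ (t p) {m m'} : PiStep m m' → PiStep (snd t p m) (snd t p m')

end Tm

open Relation


/-!
A π-step only replaces the proof component `h` of a pair, and βπ-reduction never inspects such a
component: the projection discards it and β-reduction at most copies it. So the βπ-step can be
fired first, on the original term, after which the π-step becomes zero π-steps (its pair was
discarded), one, or several (β substituted it into several places). If the βπ-step takes place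
inside the proof component being replaced, the π-step simply absorbs it.
-/

namespace Tm

variable {t t' u v w m m' n n' p p' : Tm}

theorem PiStep.lift_cong {d k : Nat} (h : PiStep m m') : PiStep (lift d k m) (lift d k m') := by
  induction h generalizing k <;> simp only [Tm.lift] <;> constructor <;> apply_assumption

theorem PiStep.subst_cong {k : Nat} {s : Tm} (h : PiStep m m') :
    PiStep (subst k s m) (subst k s m') := by
  induction h generalizing k <;> simp only [Tm.subst] <;> constructor <;> apply_assumption

theorem reflTransGen_piStep_app (hm : ReflTransGen PiStep m m') (hn : ReflTransGen PiStep n n') :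
    ReflTransGen PiStep (app m n) (app m' n') :=
  (hm.lift (app · n) fun _ _ => .appL n).trans (hn.lift (app m' ·) fun _ _ => .appR m')

theorem reflTransGen_piStep_lam (hm : ReflTransGen PiStep m m') (hn : ReflTransGen PiStep n n') :
    ReflTransGen PiStep (lam m n) (lam m' n') :=
  (hm.lift (lam · n) fun _ _ => .lamT n).trans (hn.lift (lam m' ·) fun _ _ => .lamM m')

theorem reflTransGen_piStep_pair (ht : ReflTransGen PiStep t t')
    (hp : ReflTransGen PiStep p p') (hm : ReflTransGen PiStep m m') (h h' : Tm) :
    ReflTransGen PiStep (pair t p m h) (pair t' p' m' h') :=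
  (ht.lift (pair · p m h) fun _ _ => .pair₁ p m h).trans <|
    (hp.lift (pair t' · m h) fun _ _ => .pair₂ t' m h).trans <|
    (hm.lift (pair t' p' · h) fun _ _ => .pair₃ t' p' h).tail (.pi _ _ _ _ _)

theorem reflTransGen_piStep_fst (ht : ReflTransGen PiStep t t')
    (hp : ReflTransGen PiStep p p') (hm : ReflTransGen PiStep m m') :
    ReflTransGen PiStep (fst t p m) (fst t' p' m') :=
  (ht.lift (fst · p m) fun _ _ => .fst₁ p m).trans <|
    (hp.lift (fst t' · m) fun _ _ => .fst₂ t' m).trans <|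
    hm.lift (fst t' p' ·) fun _ _ => .fst₃ t' p'

theorem reflTransGen_piStep_snd (ht : ReflTransGen PiStep t t')
    (hp : ReflTransGen PiStep p p') (hm : ReflTransGen PiStep m m') :
    ReflTransGen PiStep (snd t p m) (snd t' p' m') :=
  (ht.lift (snd · p m) fun _ _ => .snd₁ p m).trans <|
    (hp.lift (snd t' · m) fun _ _ => .snd₂ t' m).trans <|
    hm.lift (snd t' p' ·) fun _ _ => .snd₃ t' p'

theorem PiStep.reflTransGen_subst_arg {s s' : Tm} (hs : PiStep s s') (m : Tm) (k : Nat) :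
    ReflTransGen PiStep (subst k s m) (subst k s' m) := by
  induction m generalizing k with
  | var n =>
    simp only [Tm.subst]
    split
    · exact .single hs.lift_cong
    · exact .refl
  | app _ _ ih₁ ih₂ => exact reflTransGen_piStep_app (ih₁ k) (ih₂ k)
  | lam _ _ ih₁ ih₂ => exact reflTransGen_piStep_lam (ih₁ k) (ih₂ (k + 1))
  | pair _ _ _ _ ih₁ ih₂ ih₃ =>
    exact reflTransGen_piStep_pair (ih₁ k) (ih₂ k) (ih₃ k) _ _
  | fst _ _ _ ih₁ ih₂ ih₃ => exact reflTransGen_piStep_fst (ih₁ k) (ih₂ k) (ih₃ k)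
  | snd _ _ _ ih₁ ih₂ ih₃ => exact reflTransGen_piStep_snd (ih₁ k) (ih₂ k) (ih₃ k)

def StepThenPi (t v : Tm) : Prop :=
  ∃ w, (Step t w ∨ t = w) ∧ ReflTransGen PiStep w v

theorem StepThenPi.of_step (hs : Step t w) (hp : ReflTransGen PiStep w v) : StepThenPi t v :=
  ⟨w, .inl hs, hp⟩

theorem StepThenPi.map {f : Tm → Tm} (hfs : ∀ {a b}, Step a b → Step (f a) (f b))
    (hfp : ∀ {a b}, PiStep a b → PiStep (f a) (f b)) (h : StepThenPi t v) :
    StepThenPi (f t) (f v) :=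
  let ⟨w, hw, hp⟩ := h
  ⟨f w, hw.imp hfs (congrArg f), hp.lift f fun _ _ => hfp⟩

theorem PiStep.stepThenPi_of_beta {t₀ : Tm} (hp : PiStep t (app (lam t₀ m) n)) :
    StepThenPi t (subst 0 n m) := by
  cases hp with
  | appL _ h =>
    cases h with
    | lamT => exact .of_step (.beta _ _ _) .refl
    | lamM _ h => exact .of_step (.beta _ _ _) (.single h.subst_cong)
  | appR _ h => exact .of_step (.beta _ _ _) (h.reflTransGen_subst_arg m 0)

theorem PiStep.stepThenPi_of_proj {t₀ p₀ t₁ p₁ h : Tm}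
    (hp : PiStep t (fst t₀ p₀ (pair t₁ p₁ m h))) : StepThenPi t m := by
  cases hp with
  | fst₃ _ _ hpair =>
    cases hpair with
    | pair₃ _ _ _ hm => exact .of_step (.proj _ _ _ _ _ _) (.single hm)
    | _ => exact .of_step (.proj _ _ _ _ _ _) .refl
  | _ => exact .of_step (.proj _ _ _ _ _ _) .refl

theorem PiStep.stepThenPi (hp : PiStep t u) (hs : Step u v) : StepThenPi t v := by
  induction hs generalizing t with
  | beta => exact hp.stepThenPi_of_beta
  | proj => exact hp.stepThenPi_of_proj
  | pair₄ t p m hs =>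
    cases hp with
    | pi => exact ⟨_, .inr rfl, .single (.pi _ _ _ _ _)⟩
    | _ => exact .of_step (.pair₄ _ _ _ hs) (.single (by constructor; assumption))
  | appL n hs ih =>
    cases hp with
    | appL _ h => exact (ih h).map (.appL n) (.appL n)
    | _ => exact .of_step (.appL _ hs) (.single (by constructor; assumption))
  | appR m hs ih =>
    cases hp with
    | appR _ h => exact (ih h).map (.appR m) (.appR m)
    | _ => exact .of_step (.appR _ hs) (.single (by constructor; assumption))
  | lamT m hs ih =>
    cases hp with
    | lamT _ h => exact (ih h).map (.lamT m) (.lamT m)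
    | _ => exact .of_step (.lamT _ hs) (.single (by constructor; assumption))
  | lamM t hs ih =>
    cases hp with
    | lamM _ h => exact (ih h).map (.lamM t) (.lamM t)
    | _ => exact .of_step (.lamM _ hs) (.single (by constructor; assumption))
  | pair₁ p m h hs ih =>
    cases hp with
    | pair₁ _ _ _ h' => exact (ih h').map (.pair₁ p m h) (.pair₁ p m h)
    | pi => exact .of_step (.pair₁ _ _ _ hs) (.single (.pi _ _ _ _ _))
    | _ => exact .of_step (.pair₁ _ _ _ hs) (.single (by constructor; assumption))
  | pair₂ t m h hs ih =>
    cases hp with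
    | pair₂ _ _ _ h' => exact (ih h').map (.pair₂ t m h) (.pair₂ t m h)
    | pi => exact .of_step (.pair₂ _ _ _ hs) (.single (.pi _ _ _ _ _))
    | _ => exact .of_step (.pair₂ _ _ _ hs) (.single (by constructor; assumption))
  | pair₃ t p h hs ih =>
    cases hp with
    | pair₃ _ _ _ h' => exact (ih h').map (.pair₃ t p h) (.pair₃ t p h)
    | pi => exact .of_step (.pair₃ _ _ _ hs) (.single (.pi _ _ _ _ _))
    | _ => exact .of_step (.pair₃ _ _ _ hs) (.single (by constructor; assumption))
  | fst₁ p m hs ih =>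
    cases hp with
    | fst₁ _ _ h => exact (ih h).map (.fst₁ p m) (.fst₁ p m)
    | _ => exact .of_step (.fst₁ _ _ hs) (.single (by constructor; assumption))
  | fst₂ t m hs ih =>
    cases hp with
    | fst₂ _ _ h => exact (ih h).map (.fst₂ t m) (.fst₂ t m)
    | _ => exact .of_step (.fst₂ _ _ hs) (.single (by constructor; assumption))
  | fst₃ t p hs ih =>
    cases hp with
    | fst₃ _ _ h => exact (ih h).map (.fst₃ t p) (.fst₃ t p)
    | _ => exact .of_step (.fst₃ _ _ hs) (.single (by constructor; assumption))
  | snd₁ p m hs ih =>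
    cases hp with
    | snd₁ _ _ h => exact (ih h).map (.snd₁ p m) (.snd₁ p m)
    | _ => exact .of_step (.snd₁ _ _ hs) (.single (by constructor; assumption))
  | snd₂ t m hs ih =>
    cases hp with
    | snd₂ _ _ h => exact (ih h).map (.snd₂ t m) (.snd₂ t m)
    | _ => exact .of_step (.snd₂ _ _ hs) (.single (by constructor; assumption))
  | snd₃ t p hs ih =>
    cases hp with
    | snd₃ _ _ h => exact (ih h).map (.snd₃ t p) (.snd₃ t p)
    | _ => exact .of_step (.snd₃ _ _ hs) (.single (by constructor; assumption))

end Tm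

/-- Proof-irrelevance steps can be postponed over βπ-reduction. -/
theorem Tm.piStep_postponement :
    ∀ t u v : Tm, Tm.PiStep t u → Tm.Step u v →
      ∃ w, (Tm.Step t w ∨ t = w) ∧ ReflTransGen Tm.PiStep w v :=
  fun _ _ _ hp hs => hp.stepThenPi hs
end

section
/- In the lambda calculus with pair/fst/snd as above, βπ-reduction is confluent modulo the proof-irrelevance equivalence: if t →_{βπ}* u and t →_{βπ}* v, then there exist u', v' with u →_{βπ}* u', v →_{βπ}* v', and u' =_pi v', where =_pi is the reflexive-transitive closure of ↔_pi. -/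
open Relation

/-!
βπ-reduction is confluent on the nose, so two reducts of a term are joined by a common reduct
and the proof-irrelevance part of the conclusion is reflexivity. Confluence follows the
Tait–Martin-Löf method: parallel reduction `Par` lies between `Step` and its reflexive-transitive
closure and has the diamond property, because (Takahashi) every parallel reduct of `a` reduces in
one parallel step to the complete development `dev a`.
-/

namespace Tm

theorem lift_lift_of_le (s : Tm) {d j i k : Nat} (h : i ≤ k) :
    lift d (k + j) (lift j i s) = lift j i (lift d k s) := by
  induction s generalizing i k with
  | var n => grind [lift]
  | lam t m iht ihm =>
    simp only [lift, iht h, Nat.add_right_comm k j 1, ihm (Nat.succ_le_succ h)]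
  | _ => simp_all [lift]

theorem lift_lift_add (s : Tm) {j i k e : Nat} (h₁ : e ≤ i) (h₂ : i ≤ e + k) :
    lift j i (lift k e s) = lift (j + k) e s := by
  induction s generalizing i e with
  | var n => grind [lift]
  | lam t m iht ihm => simp only [lift, iht h₁ h₂, ihm (Nat.succ_le_succ h₁) (by omega)]
  | _ => simp_all [lift]

theorem subst_lift_of_le (m s : Tm) {j i k : Nat} (h : i ≤ k) :
    subst (k + j) s (lift j i m) = lift j i (subst k s m) := by
  induction m generalizing i k with
  | var n => grind [lift, subst, lift_lift_add]
  | lam t a iht iha =>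
    simp only [lift, subst, iht h, Nat.add_right_comm k j 1, iha (Nat.succ_le_succ h)]
  | _ => simp_all [lift, subst]

theorem subst_lift_cancel (s q : Tm) {i j e : Nat} (h₁ : e ≤ i) (h₂ : i < e + j) :
    subst i q (lift j e s) = lift (j - 1) e s := by
  induction s generalizing i e with
  | var n => grind [lift, subst]
  | lam t a iht iha =>
    simp only [lift, subst, iht h₁ h₂, iha (Nat.succ_le_succ h₁) (by omega)]
  | _ => simp_all [lift, subst]

theorem lift_subst (m s : Tm) {d j k : Nat} (h : j ≤ k) :
    lift d k (subst j s m) = subst j (lift d (k - j) s) (lift d (k + 1) m) := by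
  induction m generalizing j k with
  | var n => grind [lift, subst, lift_lift_of_le s (Nat.zero_le (k - j)) (d := d) (j := j)]
  | lam t a iht iha =>
    simp only [lift, subst, iht h, iha (Nat.succ_le_succ h), Nat.succ_sub_succ]
  | _ => simp_all [lift, subst]

theorem subst_subst (m s n : Tm) {i k : Nat} (h : i ≤ k) :
    subst k s (subst i n m) = subst i (subst (k - i) s n) (subst (k + 1) s m) := by
  induction m generalizing i k with
  | var n₀ =>
    grind [lift, subst, subst_lift_of_le n s (Nat.zero_le (k - i)) (j := i), subst_lift_cancel]
  | lam t a iht iha =>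
    simp only [subst, iht h, iha (Nat.succ_le_succ h), Nat.succ_sub_succ]
  | _ => simp_all [subst]

inductive Par : Tm → Tm → Prop
  | var (n) : Par (var n) (var n)
  | app {m m' n n'} : Par m m' → Par n n' → Par (app m n) (app m' n')
  | lam {t t' m m'} : Par t t' → Par m m' → Par (lam t m) (lam t' m')
  | pair {t t' p p' m m' h h'} : Par t t' → Par p p' → Par m m' → Par h h' →
      Par (pair t p m h) (pair t' p' m' h')
  | fst {t t' p p' m m'} : Par t t' → Par p p' → Par m m' → Par (fst t p m) (fst t' p' m')
  | snd {t t' p p' m m'} : Par t t' → Par p p' → Par m m' → Par (snd t p m) (snd t' p' m')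
  | beta {t m m' n n'} : Par m m' → Par n n' → Par (app (lam t m) n) (subst 0 n' m')
  | proj {t₀ p₀ t₁ p₁ m m' h} : Par m m' → Par (fst t₀ p₀ (pair t₁ p₁ m h)) m'

theorem Par.refl : ∀ m : Tm, Par m m
  | .var n => .var n
  | .app m n => .app (.refl m) (.refl n)
  | .lam t m => .lam (.refl t) (.refl m)
  | .pair t p m h => .pair (.refl t) (.refl p) (.refl m) (.refl h)
  | .fst t p m => .fst (.refl t) (.refl p) (.refl m)
  | .snd t p m => .snd (.refl t) (.refl p) (.refl m)

theorem Par.lift {a b : Tm} (h : Par a b) (d k : Nat) : Par (lift d k a) (lift d k b) := by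
  induction h generalizing k with
  | var n => exact .refl _
  | beta _ _ ihm ihn =>
    rw [Tm.lift, Tm.lift, lift_subst _ _ (Nat.zero_le k), Nat.sub_zero]
    exact .beta (ihm _) (ihn _)
  | proj _ ihm => exact .proj (ihm _)
  | app _ _ ihm ihn => exact .app (ihm _) (ihn _)
  | lam _ _ iht ihm => exact .lam (iht _) (ihm _)
  | pair _ _ _ _ iht ihp ihm ihh => exact .pair (iht _) (ihp _) (ihm _) (ihh _)
  | fst _ _ _ iht ihp ihm => exact .fst (iht _) (ihp _) (ihm _)
  | snd _ _ _ iht ihp ihm => exact .snd (iht _) (ihp _) (ihm _)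

theorem Par.subst {s s' a b : Tm} (hs : Par s s') (h : Par a b) (k : Nat) :
    Par (subst k s a) (subst k s' b) := by
  induction h generalizing k with
  | var n =>
    simp only [Tm.subst]
    split_ifs
    exacts [hs.lift _ _, .refl _, .refl _]
  | beta _ _ ihm ihn =>
    rw [Tm.subst, Tm.subst, subst_subst _ _ _ (Nat.zero_le k), Nat.sub_zero]
    exact .beta (ihm _) (ihn _)
  | proj _ ihm => exact .proj (ihm _)
  | app _ _ ihm ihn => exact .app (ihm _) (ihn _)
  | lam _ _ iht ihm => exact .lam (iht _) (ihm _)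
  | pair _ _ _ _ iht ihp ihm ihh => exact .pair (iht _) (ihp _) (ihm _) (ihh _)
  | fst _ _ _ iht ihp ihm => exact .fst (iht _) (ihp _) (ihm _)
  | snd _ _ _ iht ihp ihm => exact .snd (iht _) (ihp _) (ihm _)

def dev : Tm → Tm
  | var n => var n
  | app (lam _ m) n => subst 0 (dev n) (dev m)
  | app m n => app (dev m) (dev n)
  | lam t m => lam (dev t) (dev m)
  | pair t p m h => pair (dev t) (dev p) (dev m) (dev h)
  | fst _ _ (pair _ _ m _) => dev m
  | fst t p m => fst (dev t) (dev p) (dev m)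
  | snd t p m => snd (dev t) (dev p) (dev m)

theorem Par.lam_inv {t m b : Tm} (h : Par (Tm.lam t m) b) :
    ∃ t' m', b = Tm.lam t' m' ∧ Par m m' := by
  cases h with
  | lam _ hm => exact ⟨_, _, rfl, hm⟩

theorem Par.pair_inv {t p m h b : Tm} (hb : Par (Tm.pair t p m h) b) :
    ∃ t' p' m' h', b = Tm.pair t' p' m' h' ∧ Par m m' := by
  cases hb with
  | pair _ _ hm _ => exact ⟨_, _, _, _, rfl, hm⟩

theorem Par.to_dev {a b : Tm} (h : Par a b) : Par b (Tm.dev a) := by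
  induction h with
  | var n => exact .var n
  | @app m _ _ _ hm _ ihm ihn =>
    by_cases hlam : ∃ t₀ m₀, m = Tm.lam t₀ m₀
    · obtain ⟨t₀, m₀, rfl⟩ := hlam
      obtain ⟨_, _, rfl, -⟩ := hm.lam_inv
      obtain ⟨_, _, heq, hm₀⟩ := ihm.lam_inv
      cases heq
      exact .beta hm₀ ihn
    · rw [dev.eq_3 _ _ fun t₀ m₀ h => hlam ⟨t₀, m₀, h⟩]
      exact .app ihm ihn
  | @fst _ _ _ _ m _ _ _ hm iht ihp ihm =>
    by_cases hpair : ∃ t₁ p₁ m₁ h₁, m = Tm.pair t₁ p₁ m₁ h₁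
    · obtain ⟨t₁, p₁, m₁, h₁, rfl⟩ := hpair
      obtain ⟨_, _, _, _, rfl, -⟩ := hm.pair_inv
      obtain ⟨_, _, _, _, heq, hm₁⟩ := ihm.pair_inv
      cases heq
      exact .proj hm₁
    · rw [dev.eq_7 _ _ _ fun t₁ p₁ m₁ h₁ h => hpair ⟨t₁, p₁, m₁, h₁, h⟩]
      exact .fst iht ihp ihm
  | beta _ _ ihm ihn => exact ihn.subst ihm 0
  | proj _ ihm => exact ihm
  | lam _ _ iht ihm => exact .lam iht ihm
  | pair _ _ _ _ iht ihp ihm ihh => exact .pair iht ihp ihm ihh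
  | snd _ _ _ iht ihp ihm => exact .snd iht ihp ihm

theorem Par.diamond {a b c : Tm} (hb : Par a b) (hc : Par a c) : ∃ d, Par b d ∧ Par c d :=
  ⟨Tm.dev a, hb.to_dev, hc.to_dev⟩

theorem Step.par {a b : Tm} (h : Step a b) : Par a b := by
  induction h with
  | beta t m n => exact .beta (.refl m) (.refl n)
  | proj _ _ _ _ m _ => exact .proj (.refl m)
  | appL n _ ih => exact .app ih (.refl n)
  | appR m _ ih => exact .app (.refl m) ih
  | lamT m _ ih => exact .lam ih (.refl m)
  | lamM t _ ih => exact .lam (.refl t) ih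
  | pair₁ p m h _ ih => exact .pair ih (.refl p) (.refl m) (.refl h)
  | pair₂ t m h _ ih => exact .pair (.refl t) ih (.refl m) (.refl h)
  | pair₃ t p h _ ih => exact .pair (.refl t) (.refl p) ih (.refl h)
  | pair₄ t p m _ ih => exact .pair (.refl t) (.refl p) (.refl m) ih
  | fst₁ p m _ ih => exact .fst ih (.refl p) (.refl m)
  | fst₂ t m _ ih => exact .fst (.refl t) ih (.refl m)
  | fst₃ t p _ ih => exact .fst (.refl t) (.refl p) ih
  | snd₁ p m _ ih => exact .snd ih (.refl p) (.refl m)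
  | snd₂ t m _ ih => exact .snd (.refl t) ih (.refl m)
  | snd₃ t p _ ih => exact .snd (.refl t) (.refl p) ih

section Congr

variable {t t' p p' m m' n n' h h' : Tm}

theorem steps_app (hm : ReflTransGen Step m m') (hn : ReflTransGen Step n n') :
    ReflTransGen Step (app m n) (app m' n') :=
  (ReflTransGen.lift (app · n) (fun _ _ => .appL n) _ _ hm).trans
    (ReflTransGen.lift (app m' ·) (fun _ _ => .appR m') _ _ hn)

theorem steps_lam (ht : ReflTransGen Step t t') (hm : ReflTransGen Step m m') :
    ReflTransGen Step (lam t m) (lam t' m') :=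
  (ReflTransGen.lift (lam · m) (fun _ _ => .lamT m) _ _ ht).trans
    (ReflTransGen.lift (lam t' ·) (fun _ _ => .lamM t') _ _ hm)

theorem steps_pair (ht : ReflTransGen Step t t') (hp : ReflTransGen Step p p')
    (hm : ReflTransGen Step m m') (hh : ReflTransGen Step h h') :
    ReflTransGen Step (pair t p m h) (pair t' p' m' h') :=
  ((ReflTransGen.lift (pair · p m h) (fun _ _ => .pair₁ p m h) _ _ ht).trans
    (ReflTransGen.lift (pair t' · m h) (fun _ _ => .pair₂ t' m h) _ _ hp)).trans
    ((ReflTransGen.lift (pair t' p' · h) (fun _ _ => .pair₃ t' p' h) _ _ hm).trans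
      (ReflTransGen.lift (pair t' p' m' ·) (fun _ _ => .pair₄ t' p' m') _ _ hh))

theorem steps_fst (ht : ReflTransGen Step t t') (hp : ReflTransGen Step p p')
    (hm : ReflTransGen Step m m') : ReflTransGen Step (fst t p m) (fst t' p' m') :=
  ((ReflTransGen.lift (fst · p m) (fun _ _ => .fst₁ p m) _ _ ht).trans
    (ReflTransGen.lift (fst t' · m) (fun _ _ => .fst₂ t' m) _ _ hp)).trans
    (ReflTransGen.lift (fst t' p' ·) (fun _ _ => .fst₃ t' p') _ _ hm)

theorem steps_snd (ht : ReflTransGen Step t t') (hp : ReflTransGen Step p p')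
    (hm : ReflTransGen Step m m') : ReflTransGen Step (snd t p m) (snd t' p' m') :=
  ((ReflTransGen.lift (snd · p m) (fun _ _ => .snd₁ p m) _ _ ht).trans
    (ReflTransGen.lift (snd t' · m) (fun _ _ => .snd₂ t' m) _ _ hp)).trans
    (ReflTransGen.lift (snd t' p' ·) (fun _ _ => .snd₃ t' p') _ _ hm)

end Congr

theorem Par.steps {a b : Tm} (h : Par a b) : ReflTransGen Step a b := by
  induction h with
  | var n => rfl
  | app _ _ ihm ihn => exact steps_app ihm ihn
  | lam _ _ iht ihm => exact steps_lam iht ihm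
  | pair _ _ _ _ iht ihp ihm ihh => exact steps_pair iht ihp ihm ihh
  | fst _ _ _ iht ihp ihm => exact steps_fst iht ihp ihm
  | snd _ _ _ iht ihp ihm => exact steps_snd iht ihp ihm
  | beta _ _ ihm ihn => exact (steps_app (steps_lam .refl ihm) ihn).tail (.beta _ _ _)
  | proj _ ihm => exact .head (.proj _ _ _ _ _ _) ihm

theorem reflTransGen_par_eq_step : ReflTransGen Par = ReflTransGen Step :=
  le_antisymm (reflTransGen_closed fun _ _ => Par.steps) (ReflTransGen.mono fun _ _ => Step.par)

theorem step_confluent {t u v : Tm} (hu : ReflTransGen Step t u) (hv : ReflTransGen Step t v) :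
    Join (ReflTransGen Step) u v := by
  rw [← reflTransGen_par_eq_step] at hu hv ⊢
  refine church_rosser (fun a b c hb hc => ?_) hu hv
  obtain ⟨d, hbd, hcd⟩ := hb.diamond hc
  exact ⟨d, .single hbd, .single hcd⟩

end Tm

/-- βπ-reduction is confluent modulo the proof-irrelevance equivalence. -/
theorem Tm.step_confluent_modulo_pi :
    ∀ t u v : Tm, ReflTransGen Tm.Step t u → ReflTransGen Tm.Step t v →
      ∃ u' v', ReflTransGen Tm.Step u u' ∧ ReflTransGen Tm.Step v v' ∧
        ReflTransGen Tm.PiStep u' v' := by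
  intro t u v hu hv
  obtain ⟨w, huw, hvw⟩ := step_confluent hu hv
  exact ⟨w, w, huw, hvw, .refl⟩
end
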